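/- Scott continuity of the loop characteristic function: let Σ be a set, g : Σ → W(Σ) and w, w′ : Σ → U, and define Φ(f)(σ) = w(σ)·f†(g(σ)) + w′(σ)·η(σ) for f : Σ → W(Σ). Then Φ is Scott-continuous with respect to the pointwise order: for every nonempty directed set D of functions Σ → W(Σ) whose pointwise supremum f* (f*(σ)(τ) = ⨆_{f∈D} f(σ)(τ)) has countable support at every σ, one has ⨆_{f∈D} Φ(f)(σ) = Φ(f*)(σ) for every σ ∈ Σ. -/

import Mathlib

open scoped Classical

universe u v

/-- A semiring that is simultaneously a complete lattice with bottom `0`, whose order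
coincides with the natural (additive) order, and in which addition and multiplication
are Scott-continuous. -/
class OLSemiring (U : Type u) extends Semiring U, CompleteLattice U where
  bot_eq_zero : (⊥ : U) = 0
  le_iff_exists_add : ∀ a b : U, a ≤ b ↔ ∃ c, a + c = b
  add_scott : ∀ (D : Set U), D.Nonempty → DirectedOn (· ≤ ·) D → ∀ y : U,
    sSup ((fun x => x + y) '' D) = sSup D + y
  mul_scott_right : ∀ (D : Set U), D.Nonempty → DirectedOn (· ≤ ·) D → ∀ y : U,
    sSup ((fun x => x * y) '' D) = sSup D * y
  mul_scott_left : ∀ (D : Set U), D.Nonempty → DirectedOn (· ≤ ·) D → ∀ y : U,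
    sSup ((fun x => y * x) '' D) = y * sSup D

variable {U : Type u} [OLSemiring U]

/-- Infinite sum: supremum over finite subfamilies of finite sums. -/
noncomputable def wsum {I : Type v} (f : I → U) : U :=
  ⨆ J : Finset I, ∑ i ∈ J, f i

/-- The unit of the weighting monad. -/
noncomputable def eta {X : Type u} (x : X) : X → U :=
  fun y => if y = x then 1 else 0

/-- Kleisli extension: `kext f m y = ∑_{x ∈ supp m} m x * f x y`. -/
noncomputable def kext {X Y : Type u} (f : X → Y → U) (m : X → U) : Y → U :=
  fun y => wsum (fun x : Function.support m => m x.1 * f x.1 y)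


/-- The characteristic function of iteration:
`Φ(f)(σ)(τ) = w(σ)·f†(g(σ))(τ) + w′(σ)·η(σ)(τ)`. -/
noncomputable def Phi {U : Type u} [OLSemiring U] {St : Type u}
    (w w' : St → U) (g : St → St → U) (f : St → St → U) : St → St → U :=
  fun σ τ => w σ * kext f (g σ) τ + w' σ * eta σ τ

/-!
`Φ(f)(σ)(τ)` is obtained from `f` by Kleisli extension along `g σ`, left multiplication by `w σ`
and addition of a constant, and each of these commutes with directed suprema. For the Kleisli
extension, a countable sum is the supremum of its finite partial sums, and this supremum commutes
with the one over the directed family; a finite sum of directed suprema is the supremum of the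
finite sums, because Scott continuity of `+` in each argument together with directedness lets two
suprema be merged into one.
-/

theorem Monotone.directed_comp {ι : Sort*} {α β : Type*} [Preorder α] [Preorder β]
    {g : α → β} (hg : Monotone g) {f : ι → α} (hf : Directed (· ≤ ·) f) :
    Directed (· ≤ ·) fun i => g (f i) :=
  hf.mono_comp (· ≤ ·) fun _ _ h => hg h

namespace OLSemiring

instance : CanonicallyOrderedAdd U where
  exists_add_of_le h := ((le_iff_exists_add _ _).1 h).imp fun _ hc => hc.symm
  le_add_self a b := (le_iff_exists_add _ _).2 ⟨b, add_comm a b⟩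
  le_self_add _ b := (le_iff_exists_add _ _).2 ⟨b, rfl⟩

section Directed

variable {ι : Sort*} [Nonempty ι]

theorem iSup_add_of_directed {f : ι → U} (hf : Directed (· ≤ ·) f) (y : U) :
    ⨆ i, (f i + y) = (⨆ i, f i) + y := by
  have h := add_scott (Set.range f) (Set.range_nonempty f) hf.directedOn_range y
  rwa [← Set.range_comp, sSup_range, sSup_range] at h

theorem mul_iSup_of_directed {f : ι → U} (hf : Directed (· ≤ ·) f) (y : U) :
    ⨆ i, y * f i = y * ⨆ i, f i := by
  have h := mul_scott_left (Set.range f) (Set.range_nonempty f) hf.directedOn_range y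
  rwa [← Set.range_comp, sSup_range, sSup_range] at h

theorem iSup_add_iSup_of_directed {A B : ι → U} (h : Directed (· ≤ ·) fun i => (A i, B i)) :
    ⨆ i, (A i + B i) = (⨆ i, A i) + ⨆ i, B i := by
  refine le_antisymm (iSup_le fun i => add_le_add (le_iSup A i) (le_iSup B i)) ?_
  rw [← iSup_add_of_directed (monotone_fst.directed_comp h)]
  refine iSup_le fun i => ?_
  rw [add_comm, ← iSup_add_of_directed (monotone_snd.directed_comp h)]
  refine iSup_le fun j => ?_
  obtain ⟨k, hik, hjk⟩ := h i j
  calc B j + A i = A i + B j := add_comm _ _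
    _ ≤ A k + B k := add_le_add hik.1 hjk.2
    _ ≤ ⨆ i, (A i + B i) := le_iSup (fun i => A i + B i) k

theorem iSup_sum_of_directed {α : Type*} {A : ι → α → U} (hA : Directed (· ≤ ·) A)
    (s : Finset α) : ⨆ i, ∑ a ∈ s, A i a = ∑ a ∈ s, ⨆ i, A i a := by
  induction s using Finset.cons_induction with
  | empty => simp
  | cons b s _ ih =>
    have hmono : Monotone fun F : α → U => (F b, ∑ a ∈ s, F a) :=
      fun _ _ h => ⟨h b, Finset.sum_le_sum fun a _ => h a⟩
    simp only [Finset.sum_cons]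
    rw [iSup_add_iSup_of_directed (hmono.directed_comp hA), ih]

end Directed

section Kleisli

variable {X Y : Type u}

theorem kext_mono (m : X → U) : Monotone fun f : X → Y → U => kext f m :=
  fun _ _ h y => iSup_mono fun _ => Finset.sum_le_sum fun x _ => mul_right_mono (h x y)

theorem iSup_kext {ι : Sort*} [Nonempty ι] {F : ι → X → Y → U} (hF : Directed (· ≤ ·) F)
    (m : X → U) (y : Y) :
    ⨆ i, kext (F i) m y = kext (fun x y => ⨆ i, F i x y) m y := by
  have hterms : Monotone fun (f : X → Y → U) (x : Function.support m) => m x * f x y :=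
    fun _ _ h x => mul_right_mono (h x y)
  unfold kext wsum
  rw [iSup_comm]
  refine iSup_congr fun J => ?_
  rw [iSup_sum_of_directed (hterms.directed_comp hF)]
  refine Finset.sum_congr rfl fun x _ => mul_iSup_of_directed ?_ _
  exact (Function.monotone_eval y |>.comp (Function.monotone_eval x.1)).directed_comp hF

end Kleisli

theorem Phi_iSup {St : Type u} (w w' : St → U) (g : St → St → U) {ι : Sort*} [Nonempty ι]
    {F : ι → St → St → U} (hF : Directed (· ≤ ·) F) (σ τ : St) :
    ⨆ i, Phi w w' g (F i) σ τ = Phi w w' g (fun σ' τ' => ⨆ i, F i σ' τ') σ τ := by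
  have hkext : Directed (· ≤ ·) fun i => kext (F i) (g σ) τ :=
    ((Function.monotone_eval τ).comp (kext_mono (g σ))).directed_comp hF
  simp only [Phi]
  rw [iSup_add_of_directed, mul_iSup_of_directed hkext, iSup_kext hF]
  exact mul_right_mono.directed_comp hkext

end OLSemiring

theorem Phi_scott_continuous_general {U : Type u} [OLSemiring U] {St : Type u}
    (g : St → St → U)
    (w w' : St → U)
    (D : Set (St → St → U)) (hne : D.Nonempty) (hdir : DirectedOn (· ≤ ·) D)
    (σ : St) :
    (fun τ => ⨆ f ∈ D, Phi w w' g f σ τ)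
      = Phi w w' g (fun σ' τ => ⨆ f ∈ D, f σ' τ) σ := by
  have : Nonempty D := hne.to_subtype
  funext τ
  simp only [iSup_subtype']
  exact OLSemiring.Phi_iSup w w' g hdir.directed_val σ τ

/-- **Scott continuity of the loop characteristic function**: for every nonempty directed
set `D` of functions `Σ → W(Σ)` (pointwise order) whose pointwise supremum `f*` has
countable support at every state, `⨆_{f∈D} Φ(f)(σ) = Φ(f*)(σ)` for every `σ`. -/
theorem Phi_scott_continuous {U : Type u} [OLSemiring U] {St : Type u}
    (g : St → St → U) (hg : ∀ σ, (Function.support (g σ)).Countable)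
    (w w' : St → U)
    (D : Set (St → St → U)) (hne : D.Nonempty) (hdir : DirectedOn (· ≤ ·) D)
    (hD : ∀ f ∈ D, ∀ σ, (Function.support (f σ)).Countable)
    (hstar : ∀ σ, (Function.support (fun τ => ⨆ f ∈ D, f σ τ)).Countable)
    (σ : St) :
    (fun τ => ⨆ f ∈ D, Phi w w' g f σ τ)
      = Phi w w' g (fun σ' τ => ⨆ f ∈ D, f σ' τ) σ :=
  Phi_scott_continuous_general g w w' D hne hdir σ
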